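/- Let p ≥ 1 and m ≥ 2 be integers and let F : ℝ^p → ℂ be C^∞ on ℝ^p∖{0} and homogeneous of degree m. Then F is of class C^{m−1} on all of ℝ^p. -/

import Mathlib

open MeasureTheory Filter Set
open scoped ENNReal FourierTransform

noncomputable section

/-- `ℝ^n`. -/
abbrev Rn (n : ℕ) := EuclideanSpace ℝ (Fin n)

variable {n : ℕ}

/-- Partial derivative `∂_i` of a complex-valued function on `ℝ^n`. -/
def pd (i : Fin n) (f : Rn n → ℂ) : Rn n → ℂ :=
  fun x => fderiv ℝ f x (EuclideanSpace.single i 1)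

/-- Partial derivative `∂_i` of a real-valued function on `ℝ^n`. -/
def pdR (i : Fin n) (f : Rn n → ℝ) : Rn n → ℝ :=
  fun x => fderiv ℝ f x (EuclideanSpace.single i 1)

/-- Laplacian of a complex-valued function. -/
def lap (f : Rn n → ℂ) : Rn n → ℂ := fun x => ∑ i, pd i (pd i f) x

/-- Laplacian of a real-valued function. -/
def lapR (f : Rn n → ℝ) : Rn n → ℝ := fun x => ∑ i, pdR i (pdR i f) x

/-- Sobolev `H^k` norm (for smooth functions): `(Σ_{j≤k} ‖D^j f‖_{L²}²)^{1/2}`. -/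
def HkNorm (k : ℕ) (f : Rn n → ℂ) : ℝ≥0∞ :=
  (∑ j ∈ Finset.range (k+1),
    (eLpNorm (fun x => ‖iteratedFDeriv ℝ j f x‖) 2 volume)^2) ^ (1/2 : ℝ)

/-- Sobolev `H^k` norm of a real-valued function. -/
def HkNormR (k : ℕ) (f : Rn n → ℝ) : ℝ≥0∞ :=
  (∑ j ∈ Finset.range (k+1),
    (eLpNorm (fun x => ‖iteratedFDeriv ℝ j f x‖) 2 volume)^2) ^ (1/2 : ℝ)

/-- Membership in `H^k(ℝ^n)` (smooth model). -/
def InHk (k : ℕ) (f : Rn n → ℂ) : Prop := ContDiff ℝ k f ∧ HkNorm k f < ⊤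

/-- Membership in `H^∞(ℝ^n) = ∩_k H^k(ℝ^n)`. -/
def InHinf (f : Rn n → ℂ) : Prop := ∀ k, InHk k f

def InHkR (k : ℕ) (f : Rn n → ℝ) : Prop := ContDiff ℝ k f ∧ HkNormR k f < ⊤

def InHinfR (f : Rn n → ℝ) : Prop := ∀ k, InHkR k f

/-- `u ∈ C(S; H^∞(ℝ^n))` for a time set `S ⊆ ℝ`. -/
def ContHinfOn (S : Set ℝ) (u : ℝ → Rn n → ℂ) : Prop :=
  (∀ t ∈ S, InHinf (u t)) ∧
  ∀ k : ℕ, ∀ t ∈ S,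
    Tendsto (fun s => HkNorm k (fun x => u s x - u t x)) (nhdsWithin t S) (nhds 0)

def ContHinfOnR (S : Set ℝ) (φ : ℝ → Rn n → ℝ) : Prop :=
  (∀ t ∈ S, InHinfR (φ t)) ∧
  ∀ k : ℕ, ∀ t ∈ S,
    Tendsto (fun s => HkNormR k (fun x => φ s x - φ t x)) (nhdsWithin t S) (nhds 0)

/-- The Cauchy problem (NLS_ε): `iε ∂_t u + (ε²/2) Δu = |u|^{2σ} u` on the time set `S`,
with initial datum `u0`. -/
def IsNLS (σ n : ℕ) (ε : ℝ) (u0 : Rn n → ℂ) (S : Set ℝ) (u : ℝ → Rn n → ℂ) : Prop :=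
  (∀ x, u 0 x = u0 x) ∧
  ∀ t ∈ S, ∀ x,
    Complex.I * ε * derivWithin (fun s => u s x) S t + (ε^2/2) * lap (u t) x
      = (‖u t x‖ : ℂ)^(2*σ) * u t x

/-- The WKB initial datum `a_0^ε e^{iφ_0/ε}`. -/
def WKBdatum (n : ℕ) (a0e : ℝ → Rn n → ℂ) (φ0 : Rn n → ℝ) (ε : ℝ) : Rn n → ℂ :=
  fun x => a0e ε x * Complex.exp (Complex.I * (φ0 x) / ε)

/-- The limit system (E):
`∂_t φ + |∇φ|²/2 + |a|^{2σ} = 0`, `∂_t a + ∇φ·∇a + aΔφ/2 = 0` on the time set `S`. -/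
def IsLimit (σ n : ℕ) (φ0 : Rn n → ℝ) (a0 : Rn n → ℂ) (S : Set ℝ)
    (φ : ℝ → Rn n → ℝ) (a : ℝ → Rn n → ℂ) : Prop :=
  (∀ x, φ 0 x = φ0 x) ∧ (∀ x, a 0 x = a0 x) ∧
  ∀ t ∈ S, ∀ x,
    (derivWithin (fun s => φ s x) S t + (1/2) * ∑ i, (pdR i (φ t) x)^2
       + (‖a t x‖)^(2*σ) = 0) ∧
    (derivWithin (fun s => a s x) S t + (∑ i, (pdR i (φ t) x : ℂ) * pd i (a t) x)
       + (1/2) * a t x * (lapR (φ t) x : ℂ) = 0)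

/-- Assumption (A). -/
def AssumpA (n : ℕ) (a0e : ℝ → Rn n → ℂ) (a0 : Rn n → ℂ) (φ0 : Rn n → ℝ) : Prop :=
  InHinf a0 ∧ InHinfR φ0 ∧ (∀ ε ∈ Ioc (0:ℝ) 1, InHinf (a0e ε)) ∧
  ∀ k : ℕ, ∃ C : ℝ, ∀ ε ∈ Ioc (0:ℝ) 1,
    HkNorm k (fun x => a0e ε x - a0 x) ≤ ENNReal.ofReal (C * ε)

/-- Assumption (A'): Assumption (A) together with a first order expansion
`a_0^ε = a_0 + ε a_1 + O(ε²)`. -/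
def AssumpA' (n : ℕ) (a0e : ℝ → Rn n → ℂ) (a0 : Rn n → ℂ) (φ0 : Rn n → ℝ)
    (a1 : Rn n → ℂ) : Prop :=
  AssumpA n a0e a0 φ0 ∧ InHinf a1 ∧
  ∀ k : ℕ, ∃ C : ℝ, ∀ ε ∈ Ioc (0:ℝ) 1,
    HkNorm k (fun x => a0e ε x - a0 x - (ε:ℂ) * a1 x) ≤ ENNReal.ofReal (C * ε^2)

/-- The admissible Sobolev indices `k` in the main theorem. -/
def goodIndex (σ n k : ℕ) : Prop :=
  σ = 1 ∨ (σ = 2 ∧ n = 1 ∧ k = 2) ∨ (σ = 2 ∧ 2 ≤ n ∧ k = 1) ∨ (3 ≤ σ ∧ k = σ)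

/-- `Q_σ(r₁,r₂) = 2σ ∫₀¹ (1-s)(r₂+s(r₁-r₂))^{σ-1} ds`. -/
def Qs (σ : ℕ) (r1 r2 : ℝ) : ℝ :=
  2 * σ * ∫ s in (0:ℝ)..1, (1 - s) * (r2 + s * (r1 - r2))^(σ - 1)

/-- `B_σ(r₁,r₂) = (r₁-r₂)√(Q_σ(r₁,r₂))`. -/
def Bs (σ : ℕ) (r1 r2 : ℝ) : ℝ := (r1 - r2) * Real.sqrt (Qs σ r1 r2)

/-- `P_σ(r₁,r₂) = Σ_{ℓ<σ} r₁^{σ-1-ℓ} r₂^ℓ`. -/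
def Ps (σ : ℕ) (r1 r2 : ℝ) : ℝ := ∑ l ∈ Finset.range σ, r1^(σ - 1 - l) * r2^l

/-- `G_σ(r₁,r₂) = P_σ(r₁,r₂)/√(Q_σ(r₁,r₂))` (with the convention `G_σ(0,0) = 0` for `σ ≥ 2`,
which holds automatically since `0/0 = 0` and `P_σ(0,0) = 0`). -/
def Gs (σ : ℕ) (r1 r2 : ℝ) : ℝ := Ps σ r1 r2 / Real.sqrt (Qs σ r1 r2)

end

section keyhomwrap
open Asymptotics

section keyhom2

variable {p : ℕ}

private theorem hom_zero {V : Type} [NormedAddCommGroup V] [NormedSpace ℝ V]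
    {G : EuclideanSpace ℝ (Fin p) → V} {m : ℕ} (hm : 1 ≤ m)
    (hGh : ∀ l : ℝ, 0 ≤ l → ∀ y, G (l • y) = l ^ m • G y) : G 0 = 0 := by
  have h := hGh 0 le_rfl 0
  simpa [zero_pow (by omega : m ≠ 0)] using h

private theorem hom_bound {V : Type} [NormedAddCommGroup V] [NormedSpace ℝ V]
    {G : EuclideanSpace ℝ (Fin p) → V} {m : ℕ} (hm : 1 ≤ m)
    (hGs : ContDiffOn ℝ (⊤ : ℕ∞) G {y | y ≠ 0})
    (hGh : ∀ l : ℝ, 0 ≤ l → ∀ y, G (l • y) = l ^ m • G y) :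
    ∃ C : ℝ, 0 ≤ C ∧ ∀ y, ‖G y‖ ≤ C * ‖y‖ ^ m := by
  have hsub : Metric.sphere (0 : EuclideanSpace ℝ (Fin p)) 1 ⊆ {y | y ≠ 0} := by
    intro x hx
    rw [mem_sphere_zero_iff_norm] at hx
    intro h0
    rw [h0] at hx; simp at hx
  obtain ⟨C, hC⟩ := (isCompact_sphere (0 : EuclideanSpace ℝ (Fin p)) 1).exists_bound_of_continuousOn
    (hGs.continuousOn.mono hsub)
  refine ⟨max C 0, le_max_right _ _, fun y => ?_⟩
  rcases eq_or_ne y 0 with rfl | hy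
  · simp [hom_zero hm hGh, zero_pow (by omega : m ≠ 0)]
  · have hny : (0:ℝ) < ‖y‖ := norm_pos_iff.mpr hy
    set z : EuclideanSpace ℝ (Fin p) := ‖y‖⁻¹ • y with hz
    have hzs : z ∈ Metric.sphere (0 : EuclideanSpace ℝ (Fin p)) 1 := by
      rw [mem_sphere_zero_iff_norm, hz, norm_smul, norm_inv, norm_norm]
      field_simp
    have hyz : y = ‖y‖ • z := by rw [hz, smul_inv_smul₀ hny.ne']
    calc ‖G y‖ = ‖G (‖y‖ • z)‖ := by rw [← hyz]
      _ = ‖y‖ ^ m * ‖G z‖ := by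
          rw [hGh ‖y‖ hny.le z, norm_smul, Real.norm_of_nonneg (by positivity)]
      _ ≤ ‖y‖ ^ m * max C 0 := by
          gcongr
          exact (hC z hzs).trans (le_max_left _ _)
      _ = max C 0 * ‖y‖ ^ m := mul_comm _ _

private theorem key_hom (p : ℕ) : ∀ (m : ℕ), 1 ≤ m →
    ∀ (V : Type) [NormedAddCommGroup V] [NormedSpace ℝ V]
    (G : EuclideanSpace ℝ (Fin p) → V),
    ContDiffOn ℝ (⊤ : ℕ∞) G {y | y ≠ 0} →
    (∀ l : ℝ, 0 ≤ l → ∀ y, G (l • y) = l ^ m • G y) →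
    ContDiff ℝ ((m - 1 : ℕ) : ℕ∞) G := by
  intro m
  induction m with
  | zero => omega
  | succ k ih =>
    intro _ V _ _ G hGs hGh
    rcases Nat.eq_zero_or_pos k with rfl | hk
    · -- base case m = 1 : continuity
      rw [show (((0 + 1 - 1 : ℕ) : ℕ∞) : WithTop ℕ∞) = 0 by simp, contDiff_zero]
      obtain ⟨C, hC0, hCb⟩ := hom_bound (le_refl 1) hGs hGh
      rw [continuous_iff_continuousAt]
      intro y
      rcases eq_or_ne y 0 with rfl | hy
      · rw [ContinuousAt, hom_zero (le_refl 1) hGh]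
        apply squeeze_zero_norm (fun x => by simpa using hCb x)
        have : Tendsto (fun x : EuclideanSpace ℝ (Fin p) => C * ‖x‖ ^ 1) (nhds 0)
            (nhds (C * ‖(0 : EuclideanSpace ℝ (Fin p))‖ ^ 1)) := by
          exact (continuous_const.mul (continuous_norm.pow 1)).tendsto 0
        simpa using this
      · exact hGs.continuousOn.continuousAt (isOpen_ne.mem_nhds hy)
    · -- inductive step, m = k+1, k ≥ 1
      have hdiff0 : HasFDerivAt G (0 : EuclideanSpace ℝ (Fin p) →L[ℝ] V) 0 := by
        obtain ⟨C, hC0, hCb⟩ := hom_bound (by omega : 1 ≤ k + 1) hGs hGh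
        rw [hasFDerivAt_iff_isLittleO_nhds_zero]
        have h1 : (fun h : EuclideanSpace ℝ (Fin p) => G h) =O[nhds 0]
            (fun h => ‖h‖ ^ (k+1)) := by
          apply isBigO_of_le' (c := C)
          intro x
          simpa [abs_of_nonneg (pow_nonneg (norm_nonneg x) _)] using hCb x
        have h2 := (isLittleO_norm_pow_id (E' := EuclideanSpace ℝ (Fin p))
          (by omega : 1 < k + 1))
        have h3 := h1.trans_isLittleO h2
        simpa [hom_zero (by omega : 1 ≤ k+1) hGh] using h3
      have hdiff : Differentiable ℝ G := by
        intro y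
        rcases eq_or_ne y 0 with rfl | hy
        · exact hdiff0.differentiableAt
        · exact (hGs.contDiffAt (isOpen_ne.mem_nhds hy)).differentiableAt
            (by simp)
      have hfd0 : fderiv ℝ G 0 = 0 := hdiff0.fderiv
      -- homogeneity of the derivative
      have hGh' : ∀ l : ℝ, 0 ≤ l → ∀ y,
          fderiv ℝ G (l • y) = l ^ k • fderiv ℝ G y := by
        intro l hl y
        rcases eq_or_lt_of_le hl with rfl | hl
        · simp [hfd0, zero_pow (by omega : k ≠ 0)]
        rcases eq_or_ne y 0 with rfl | hy
        · simp [hfd0]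
        · have h1 : HasFDerivAt (fun x => G (l • x))
              (l • fderiv ℝ G (l • y)) y := by
            have hin : HasFDerivAt (fun x : EuclideanSpace ℝ (Fin p) => l • x)
                (l • ContinuousLinearMap.id ℝ (EuclideanSpace ℝ (Fin p))) y :=
              (ContinuousLinearMap.id ℝ _).hasFDerivAt.const_smul l
            have hout : HasFDerivAt G (fderiv ℝ G (l • y)) (l • y) :=
              (hdiff (l • y)).hasFDerivAt
            have := hout.comp y hin
            refine this.congr_fderiv ?_
            ext v
            simp
          have h2 : HasFDerivAt (fun x => G (l • x))
              (l ^ (k+1) • fderiv ℝ G y) y := by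
            have : (fun x => G (l • x)) = fun x => l ^ (k+1) • G x := by
              ext x; exact hGh l hl.le x
            rw [this]
            exact (hdiff y).hasFDerivAt.const_smul _
          have heq := h1.unique h2
          have : fderiv ℝ G (l • y) = l⁻¹ • (l ^ (k+1) • fderiv ℝ G y) := by
            rw [← heq, inv_smul_smul₀ hl.ne']
          rw [this, smul_smul]
          congr 1
          field_simp
          ring
      have hGs' : ContDiffOn ℝ (⊤ : ℕ∞) (fderiv ℝ G) {y | y ≠ 0} :=
        hGs.fderiv_of_isOpen isOpen_ne (by simp)
      have key : ContDiff ℝ ((k - 1 : ℕ) : ℕ∞) (fderiv ℝ G) :=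
        ih hk (EuclideanSpace ℝ (Fin p) →L[ℝ] V) (fderiv ℝ G) hGs' hGh'
      obtain ⟨j, rfl⟩ := Nat.exists_eq_add_of_le hk
      have : ((1 + j + 1 - 1 : ℕ) : ℕ∞) = ((j : ℕ∞) + 1 : ℕ∞) := by
        push_cast [Nat.add_sub_cancel]
        ring
      rw [this]
      rw [show (((j : ℕ∞) + 1 : ℕ∞) : WithTop ℕ∞) = (j : WithTop ℕ∞) + 1 by push_cast; rfl]
      rw [contDiff_succ_iff_fderiv]
      refine ⟨hdiff, by simp, ?_⟩
      have : ((1 + j - 1 : ℕ) : ℕ∞) = (j : ℕ∞) := by congr 1; omega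
      rw [this] at key
      exact_mod_cast key

end keyhom2
end keyhomwrap

/-- a function homogeneous of degree `m ≥ 2`, smooth away from the
origin, is of class `C^{m-1}` on all of `ℝ^p`. -/
theorem homogeneous_is_Cm_minus_one
    (p m : ℕ) (hp : 1 ≤ p) (hm : 2 ≤ m)
    (F : EuclideanSpace ℝ (Fin p) → ℂ)
    (hFsmooth : ContDiffOn ℝ (⊤ : ℕ∞) F {y | y ≠ 0})
    (hFhom : ∀ l : ℝ, 0 ≤ l → ∀ y, F (l • y) = (l : ℂ)^m * F y) :
    ContDiff ℝ ((m - 1 : ℕ) : ℕ∞) F := by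
  apply key_hom p m (by omega) ℂ F hFsmooth
  intro l hl y
  rw [hFhom l hl y, Complex.real_smul]
  push_cast
  ring
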